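/- Let c ≥ 1 be a real number, let y be a string over an alphabet Σ, let T ≥ 1, and let x = x^1 ∘ x^2 ∘ ⋯ ∘ x^T be a concatenation of strings over Σ. Suppose for each i ∈ {1,…,T}, w_i is a contiguous substring of y and d_i is a real number satisfying ED(x^i, w_i) ≤ d_i ≤ c · min over all contiguous substrings w of y of ED(x^i, w). Let ỹ = w_1 ∘ w_2 ∘ ⋯ ∘ w_T. Then ED(x, y) ≤ ED(y, ỹ) + Σ_{i=1}^T d_i ≤ (2c + 1) · ED(x, y). -/

import Mathlib

open List

namespace Levenshtein

/-- Costs for the Levenshtein distance (as in the former `Mathlib.Data.List.EditDistance.Defs`). -/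
structure Cost (α β δ : Type*) where
  delete : α → δ
  insert : β → δ
  substitute : α → β → δ

/-- The default cost structure: unit costs, free substitution of equal symbols. -/
def defaultCost {α : Type*} [DecidableEq α] : Cost α α ℕ where
  delete _ := 1
  insert _ := 1
  substitute a b := if a = b then 0 else 1

/-- Inner loop of the Levenshtein dynamic program. -/
def impl {α β δ : Type*} [AddZeroClass δ] [Min δ] (C : Cost α β δ) (xs : List α) (y : β)
    (d : {r : List δ // 0 < r.length}) : {r : List δ // 0 < r.length} :=
  let ⟨ds, w⟩ := d
  xs.zipWith (fun x d => (x, d)) (ds.zip ds.tail) |>.foldr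
    (init := ⟨[ds.getLast (List.length_pos_iff.mp w) + C.insert y], by simp⟩)
    (fun ⟨x, d₀, d₁⟩ ⟨r, w⟩ =>
      ⟨min (C.delete x + r[0]) (min (C.insert y + d₀) (C.substitute x y + d₁)) :: r, by simp⟩)

end Levenshtein

/-- Levenshtein distances from every suffix of `xs` to `ys`. -/
def suffixLevenshtein {α β δ : Type*} [AddZeroClass δ] [Min δ] (C : Levenshtein.Cost α β δ)
    (xs : List α) (ys : List β) : {r : List δ // 0 < r.length} :=
  ys.foldr
    (Levenshtein.impl C xs)
    (xs.foldr (init := ⟨[0], by simp⟩) (fun a ⟨ds, w⟩ => ⟨(C.delete a + ds[0]) :: ds, by simp⟩))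

/-- The Levenshtein distance between two lists. -/
def levenshtein {α β δ : Type*} [AddZeroClass δ] [Min δ] (C : Levenshtein.Cost α β δ)
    (xs : List α) (ys : List β) : δ :=
  let ⟨r, w⟩ := suffixLevenshtein C xs ys
  r[0]

/-- Edit distance: minimum number of single-symbol insertions, deletions and
substitutions needed to transform `u` into `v` (Levenshtein distance with unit costs). -/
def ED {α : Type*} [DecidableEq α] (u v : List α) : ℕ :=
  levenshtein Levenshtein.defaultCost u v


/-! Edit distance is the least cost of an alignment, which makes it a metric that is
subadditive under concatenation: `ED(x, ỹ) ≤ Σ ED(xⁱ, wᵢ) ≤ Σ dᵢ`. Conversely, an optimal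
alignment of `x = x¹ ∘ ⋯ ∘ xᵀ` with `y` cuts `y` into consecutive pieces `y¹ ∘ ⋯ ∘ yᵀ` with
`Σ ED(xⁱ, yⁱ) ≤ ED(x, y)`, and each `yⁱ` is a candidate substring, so `Σ dᵢ ≤ c · ED(x, y)`.
Both inequalities then follow from the triangle inequality through `ỹ`. -/

namespace Levenshtein

variable {α β δ : Type*} [AddZeroClass δ] [Min δ] (C : Cost α β δ)

theorem impl_nil (y : β) {a : δ} {s : {r : List δ // 0 < r.length}} (h : s.1 = [a]) :
    (impl C [] y s).1 = [a + C.insert y] := by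
  obtain ⟨_, _⟩ := s
  subst h
  rfl

theorem impl_cons_tail (x : α) (xs : List α) (y : β) {s t : {r : List δ // 0 < r.length}}
    (h : s.1.tail = t.1) : (impl C (x :: xs) y s).1.tail = (impl C xs y t).1 := by
  obtain ⟨_ | ⟨d, ds⟩, hs⟩ := s
  · simp at hs
  obtain ⟨_, ht⟩ := t
  subst h
  obtain ⟨_ | ⟨e, es⟩⟩ := ds
  · simp at ht
  rfl

theorem impl_cons_head (x : α) (xs : List α) (y : β) {s t : {r : List δ // 0 < r.length}}
    {d e : δ} (h : s.1 = d :: t.1) (ht : t.1[0]'t.2 = e) :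
    (impl C (x :: xs) y s).1[0]'(impl C (x :: xs) y s).2 =
      min (C.delete x + (impl C xs y t).1[0]'(impl C xs y t).2)
        (min (C.insert y + d) (C.substitute x y + e)) := by
  obtain ⟨_, _⟩ := s
  obtain ⟨_ | ⟨e, es⟩, _⟩ := t
  · contradiction
  subst h ht
  rfl

theorem suffixLevenshtein_nil_left (ys : List β) :
    ∃ a : δ, (suffixLevenshtein C ([] : List α) ys).1 = [a] := by
  induction ys with
  | nil => exact ⟨0, rfl⟩
  | cons y ys ih =>
    obtain ⟨a, ha⟩ := ih
    exact ⟨a + C.insert y, impl_nil C y ha⟩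

theorem suffixLevenshtein_cons_left (x : α) (xs : List α) (ys : List β) :
    (suffixLevenshtein C (x :: xs) ys).1 =
      levenshtein C (x :: xs) ys :: (suffixLevenshtein C xs ys).1 := by
  suffices h : (suffixLevenshtein C (x :: xs) ys).1.tail = (suffixLevenshtein C xs ys).1 by
    change _ = (suffixLevenshtein C (x :: xs) ys).1[0]'(suffixLevenshtein C (x :: xs) ys).2 :: _
    rw [← h]
    obtain ⟨_ | ⟨a, l⟩, _⟩ := suffixLevenshtein C (x :: xs) ys
    · contradiction
    · rfl
  induction ys with
  | nil => rfl
  | cons y ys ih => exact impl_cons_tail C x xs y ih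

theorem levenshtein_cons_nil (x : α) (xs : List α) :
    levenshtein C (x :: xs) ([] : List β) = C.delete x + levenshtein C xs [] := rfl

theorem levenshtein_nil_cons (y : β) (ys : List β) :
    levenshtein C ([] : List α) (y :: ys) = levenshtein C [] ys + C.insert y := by
  obtain ⟨a, ha⟩ := suffixLevenshtein_nil_left C ys
  change (impl C [] y (suffixLevenshtein C [] ys)).1[0]'(impl C [] y _).2 =
    (suffixLevenshtein C [] ys).1[0]'(suffixLevenshtein C [] ys).2 + C.insert y
  simp only [impl_nil C y ha, ha, List.getElem_cons_zero]

theorem levenshtein_cons_cons (x : α) (xs : List α) (y : β) (ys : List β) :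
    levenshtein C (x :: xs) (y :: ys) =
      min (C.delete x + levenshtein C xs (y :: ys))
        (min (C.insert y + levenshtein C (x :: xs) ys) (C.substitute x y + levenshtein C xs ys)) :=
  impl_cons_head C x xs y (suffixLevenshtein_cons_left C x xs ys) rfl

end Levenshtein

section EditDistance

variable {α : Type*} [DecidableEq α]

@[simp] theorem ED_nil_nil : ED ([] : List α) [] = 0 := rfl

@[simp] theorem ED_cons_nil (x : α) (u : List α) : ED (x :: u) [] = ED u [] + 1 :=
  (Levenshtein.levenshtein_cons_nil _ x u).trans (Nat.add_comm _ _)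

@[simp] theorem ED_nil_cons (y : α) (v : List α) : ED [] (y :: v) = ED [] v + 1 :=
  Levenshtein.levenshtein_nil_cons _ y v

@[simp] theorem ED_cons_cons (x y : α) (u v : List α) :
    ED (x :: u) (y :: v) =
      min (ED u (y :: v) + 1) (min (ED (x :: u) v + 1) (ED u v + if x = y then 0 else 1)) := by
  simp only [ED, Levenshtein.levenshtein_cons_cons, Levenshtein.defaultCost, Nat.add_comm]

inductive Aligns : List α → List α → ℕ → Prop
  | nil : Aligns [] [] 0
  | delete (x : α) {u v n} : Aligns u v n → Aligns (x :: u) v (n + 1)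
  | insert (y : α) {u v n} : Aligns u v n → Aligns u (y :: v) (n + 1)
  | substitute (x y : α) {u v n} :
      Aligns u v n → Aligns (x :: u) (y :: v) (n + if x = y then 0 else 1)

theorem ED_cons_left_le (x : α) (u v : List α) : ED (x :: u) v ≤ ED u v + 1 := by
  cases v <;> simp

theorem ED_cons_right_le (y : α) (u v : List α) : ED u (y :: v) ≤ ED u v + 1 := by
  cases u <;> simp

theorem ED_cons_cons_le (x y : α) (u v : List α) :
    ED (x :: u) (y :: v) ≤ ED u v + if x = y then 0 else 1 := by
  simp

theorem ED_le_of_aligns {u v : List α} {n : ℕ} (h : Aligns u v n) : ED u v ≤ n := by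
  induction h with
  | nil => rfl
  | delete x _ ih => exact (ED_cons_left_le ..).trans (Nat.add_le_add_right ih 1)
  | insert y _ ih => exact (ED_cons_right_le ..).trans (Nat.add_le_add_right ih 1)
  | substitute x y _ ih => exact (ED_cons_cons_le ..).trans (Nat.add_le_add_right ih _)

theorem aligns_ED : ∀ u v : List α, Aligns u v (ED u v)
  | [], [] => .nil
  | x :: u, [] => by rw [ED_cons_nil]; exact .delete x (aligns_ED u [])
  | [], y :: v => by rw [ED_nil_cons]; exact .insert y (aligns_ED [] v)
  | x :: u, y :: v => by
    rw [ED_cons_cons]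
    rcases min_choice (ED u (y :: v) + 1) (min (ED (x :: u) v + 1) (ED u v + _)) with h | h <;>
      rw [h]
    · exact .delete x (aligns_ED u (y :: v))
    rcases min_choice (ED (x :: u) v + 1) (ED u v + _) with h | h <;> rw [h]
    · exact .insert y (aligns_ED (x :: u) v)
    · exact .substitute x y (aligns_ED u v)

theorem Aligns.symm {u v : List α} {n : ℕ} (h : Aligns u v n) : Aligns v u n := by
  induction h with
  | nil => exact .nil
  | delete x _ ih => exact .insert x ih
  | insert y _ ih => exact .delete y ih
  | substitute x y _ ih => simpa only [eq_comm] using ih.substitute y x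

theorem ED_comm (u v : List α) : ED u v = ED v u :=
  (ED_le_of_aligns (aligns_ED v u).symm).antisymm (ED_le_of_aligns (aligns_ED u v).symm)

theorem Aligns.trans : {u v w : List α} → {m n : ℕ} → Aligns u v m → Aligns v w n →
    ∃ k ≤ m + n, Aligns u w k
  | _, _, _, _, _, .nil, h => ⟨_, by omega, h⟩
  | _, _, _, _, _, .delete x h₁, h₂ =>
    let ⟨k, hk, h⟩ := h₁.trans h₂; ⟨k + 1, by omega, .delete x h⟩
  | _, _, _, _, _, h₁, .insert z h₂ =>
    let ⟨k, hk, h⟩ := h₁.trans h₂; ⟨k + 1, by omega, .insert z h⟩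
  | _, _, _, _, _, .insert y h₁, .delete _ h₂ =>
    let ⟨k, hk, h⟩ := h₁.trans h₂; ⟨k, by omega, h⟩
  | _, _, _, _, _, .insert y h₁, .substitute _ z h₂ =>
    let ⟨k, hk, h⟩ := h₁.trans h₂; ⟨k + 1, by split <;> omega, .insert z h⟩
  | _, _, _, _, _, .substitute x y h₁, .delete _ h₂ =>
    let ⟨k, hk, h⟩ := h₁.trans h₂; ⟨k + 1, by split <;> omega, .delete x h⟩
  | _, _, _, _, _, .substitute x y h₁, .substitute _ z h₂ =>
    let ⟨k, hk, h⟩ := h₁.trans h₂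
    ⟨_, by split_ifs at * <;> simp_all <;> omega, .substitute x z h⟩
termination_by u v w => u.length + v.length + w.length

theorem ED_triangle (u v w : List α) : ED u w ≤ ED u v + ED v w :=
  let ⟨_, hk, h⟩ := (aligns_ED u v).trans (aligns_ED v w)
  (ED_le_of_aligns h).trans hk

theorem Aligns.append {a b u v : List α} {m n : ℕ} (h₁ : Aligns a u m) (h₂ : Aligns b v n) :
    Aligns (a ++ b) (u ++ v) (m + n) := by
  induction h₁ with
  | nil => simpa using h₂
  | delete x _ ih => simpa only [List.cons_append, Nat.add_right_comm] using ih.delete x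
  | insert y _ ih => simpa only [List.cons_append, Nat.add_right_comm] using ih.insert y
  | substitute x y _ ih => simpa only [List.cons_append, Nat.add_right_comm] using ih.substitute x y

theorem ED_append_le (a b u v : List α) : ED (a ++ b) (u ++ v) ≤ ED a u + ED b v :=
  ED_le_of_aligns ((aligns_ED a u).append (aligns_ED b v))

theorem Aligns.exists_split {u v : List α} {n : ℕ} (h : Aligns u v n) {a b : List α}
    (hab : u = a ++ b) :
    ∃ v₁ v₂ m k, v = v₁ ++ v₂ ∧ m + k = n ∧ Aligns a v₁ m ∧ Aligns b v₂ k := by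
  induction h generalizing a with
  | nil =>
    obtain ⟨rfl, rfl⟩ := List.append_eq_nil_iff.mp hab.symm
    exact ⟨[], [], 0, 0, rfl, rfl, .nil, .nil⟩
  | delete x h ih =>
    rcases a with _ | ⟨x', a⟩
    · rw [List.nil_append] at hab
      exact ⟨[], _, 0, _, rfl, zero_add _, .nil, hab ▸ h.delete x⟩
    simp only [List.cons_append, List.cons.injEq] at hab
    obtain ⟨rfl, hab⟩ := hab
    obtain ⟨v₁, v₂, m, k, rfl, rfl, h₁, h₂⟩ := ih hab
    exact ⟨v₁, v₂, m + 1, k, rfl, Nat.add_right_comm .., h₁.delete x, h₂⟩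
  | insert y h ih =>
    obtain ⟨v₁, v₂, m, k, rfl, rfl, h₁, h₂⟩ := ih hab
    exact ⟨y :: v₁, v₂, m + 1, k, rfl, Nat.add_right_comm .., h₁.insert y, h₂⟩
  | substitute x y h ih =>
    rcases a with _ | ⟨x', a⟩
    · rw [List.nil_append] at hab
      exact ⟨[], _, 0, _, rfl, zero_add _, .nil, hab ▸ h.substitute x y⟩
    simp only [List.cons_append, List.cons.injEq] at hab
    obtain ⟨rfl, hab⟩ := hab
    obtain ⟨v₁, v₂, m, k, rfl, rfl, h₁, h₂⟩ := ih hab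
    exact ⟨y :: v₁, v₂, _, k, rfl, Nat.add_right_comm .., h₁.substitute x y, h₂⟩

theorem exists_append_eq_ED_add_le (a b v : List α) :
    ∃ v₁ v₂, v = v₁ ++ v₂ ∧ ED a v₁ + ED b v₂ ≤ ED (a ++ b) v :=
  let ⟨v₁, v₂, _, _, hv, hmk, h₁, h₂⟩ := (aligns_ED (a ++ b) v).exists_split rfl
  ⟨v₁, v₂, hv, hmk ▸ Nat.add_le_add (ED_le_of_aligns h₁) (ED_le_of_aligns h₂)⟩

theorem ED_flatten_ofFn_le : ∀ {n : ℕ} (X W : Fin n → List α),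
    ED (ofFn X).flatten (ofFn W).flatten ≤ ∑ i, ED (X i) (W i)
  | 0, _, _ => by simp
  | n + 1, X, W => by
    simp only [List.ofFn_succ, List.flatten_cons, Fin.sum_univ_succ]
    exact (ED_append_le ..).trans (Nat.add_le_add_left (ED_flatten_ofFn_le _ _) _)

theorem exists_infix_sum_ED_le : ∀ {n : ℕ} (X : Fin n → List α) (v : List α),
    ∃ V : Fin n → List α, (∀ i, V i <:+: v) ∧ ∑ i, ED (X i) (V i) ≤ ED (ofFn X).flatten v
  | 0, _, _ => ⟨Fin.elim0, fun i ↦ i.elim0, by simp⟩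
  | n + 1, X, v => by
    obtain ⟨v₁, v₂, rfl, hsplit⟩ :=
      exists_append_eq_ED_add_le (X 0) (ofFn fun i ↦ X i.succ).flatten v
    obtain ⟨V, hV, hsum⟩ := exists_infix_sum_ED_le (fun i ↦ X i.succ) v₂
    refine ⟨Fin.cons v₁ V, Fin.cases (List.prefix_append v₁ v₂).isInfix
      fun i ↦ (hV i).trans (List.suffix_append v₁ v₂).isInfix, ?_⟩
    rw [Fin.sum_univ_succ, List.ofFn_succ, List.flatten_cons]
    simp only [Fin.cons_zero, Fin.cons_succ]
    omega

theorem sum_sInf_ED_infix_le {n : ℕ} (X : Fin n → List α) (y : List α) :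
    ∑ i, sInf {k | ∃ w, w <:+: y ∧ k = ED (X i) w} ≤ ED (ofFn X).flatten y := by
  obtain ⟨V, hV, hsum⟩ := exists_infix_sum_ED_le X y
  refine (Finset.sum_le_sum fun i _ ↦ Nat.sInf_le ?_).trans hsum
  exact ⟨V i, hV i, rfl⟩

end EditDistance

theorem stmt5_general {α : Type*} [DecidableEq α] (c : ℝ) (hc : 1 ≤ c)
    (T : ℕ)
    (y : List α) (X : Fin T → List α) (W : Fin T → List α) (d : Fin T → ℝ)
    (hlow : ∀ i, (ED (X i) (W i) : ℝ) ≤ d i)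
    (hhigh : ∀ i, d i ≤ c * ((sInf {k : ℕ | ∃ w : List α, w <:+: y ∧ k = ED (X i) w} : ℕ) : ℝ)) :
    (ED (List.ofFn X).flatten y : ℝ) ≤ (ED y (List.ofFn W).flatten : ℝ) + ∑ i : Fin T, d i ∧
    (ED y (List.ofFn W).flatten : ℝ) + ∑ i : Fin T, d i
      ≤ (2 * c + 1) * (ED (List.ofFn X).flatten y : ℝ) := by
  set x := (List.ofFn X).flatten
  set y' := (List.ofFn W).flatten
  have hfit : (ED x y' : ℝ) ≤ ∑ i, d i := calc
    (ED x y' : ℝ) ≤ ∑ i, (ED (X i) (W i) : ℝ) := mod_cast ED_flatten_ofFn_le X W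
    _ ≤ ∑ i, d i := Finset.sum_le_sum fun i _ ↦ hlow i
  have hopt : ∑ i, d i ≤ c * ED x y := calc
    ∑ i, d i ≤ ∑ i, c * (sInf {k | ∃ w, w <:+: y ∧ k = ED (X i) w} : ℕ) :=
      Finset.sum_le_sum fun i _ ↦ hhigh i
    _ = c * ((∑ i, sInf {k | ∃ w, w <:+: y ∧ k = ED (X i) w} : ℕ) : ℝ) := by
      push_cast; rw [Finset.mul_sum]
    _ ≤ c * ED x y := by gcongr; exact_mod_cast sum_sInf_ED_infix_le X y
  have hxy : (ED x y : ℝ) ≤ ED x y' + ED y y' := mod_cast ED_comm y y' ▸ ED_triangle x y' y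
  have hyy' : (ED y y' : ℝ) ≤ ED x y + ED x y' := mod_cast ED_comm x y ▸ ED_triangle y x y'
  constructor <;> linarith

/-- Let `c ≥ 1` be real, `x = x^1 ∘ ⋯ ∘ x^T` (with `T ≥ 1`), and for
each `i` let `w_i` be a contiguous substring of `y` and `d_i` a real number with
`ED(x^i, w_i) ≤ d_i ≤ c · min_w ED(x^i, w)` (minimum over contiguous substrings `w` of `y`).
With `ỹ = w_1 ∘ ⋯ ∘ w_T` we have `ED(x, y) ≤ ED(y, ỹ) + Σ_i d_i ≤ (2c+1)·ED(x, y)`. -/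
theorem stmt5 {α : Type*} [DecidableEq α] (c : ℝ) (hc : 1 ≤ c)
    (T : ℕ) (hT : 1 ≤ T)
    (y : List α) (X : Fin T → List α) (W : Fin T → List α) (d : Fin T → ℝ)
    (hW : ∀ i, W i <:+: y)
    (hlow : ∀ i, (ED (X i) (W i) : ℝ) ≤ d i)
    (hhigh : ∀ i, d i ≤ c * ((sInf {k : ℕ | ∃ w : List α, w <:+: y ∧ k = ED (X i) w} : ℕ) : ℝ)) :
    (ED (List.ofFn X).flatten y : ℝ) ≤ (ED y (List.ofFn W).flatten : ℝ) + ∑ i : Fin T, d i ∧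
    (ED y (List.ofFn W).flatten : ℝ) + ∑ i : Fin T, d i
      ≤ (2 * c + 1) * (ED (List.ofFn X).flatten y : ℝ) :=
  stmt5_general c hc T y X W d hlow hhigh
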